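/- Let n ≥ 2. The symmetric canonical elements ξ of SO(2n+1) having exactly one odd coordinate, equivalently with m_ξ^+ = 2 and min(m_ξ^+, m_ξ^-) = 2 (so that the associated inner symmetric space is the real Grassmannian G^ℝ_2(2n+1)), are precisely the elements ξ_1 = H_1 and ξ_i = H_{i−1} + H_i for 2 ≤ i ≤ n. Moreover, the uniton number for the standard representation is 2a_1, which equals 2 for ξ_1 and 4 for each ξ_i with 2 ≤ i ≤ n. -/
import Mathlib


open scoped Classical

/-- `H_i = E_1 + ⋯ + E_i` for `so(2n+1)` (1-based index `i`). -/
def Hspin (n i : ℕ) : Fin n → ℝ := fun j => if (j : ℕ) + 1 ≤ i then 1 else 0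

/-- The integer lattice `ℤ^n` inside `ℝ^n` (the integer lattice of `SO(2n+1)`). -/
def IntLat (n : ℕ) : Set (Fin n → ℝ) := {v | ∀ j, ∃ m : ℤ, v j = m}

/-- The set of symmetric canonical elements for a lattice `𝔏 ⊆ ℝ^n`. -/
def SymCanonSet (n : ℕ) (𝔏 : Set (Fin n → ℝ)) (H : ℕ → Fin n → ℝ) :
    Set (Fin n → ℝ) :=
  {ξ | ∃ c : ℕ → ℕ, ξ = ∑ i ∈ Finset.Icc 1 n, c i • H i ∧ ξ ∈ 𝔏 ∧
    ∀ c' : ℕ → ℕ, (∀ i ∈ Finset.Icc 1 n, c' i ≤ c i) →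
      (∑ i ∈ Finset.Icc 1 n, c' i • H i) ∈ 𝔏 →
      (ξ - ∑ i ∈ Finset.Icc 1 n, c' i • H i) ∈ (fun v => (2 : ℝ) • v) '' 𝔏 →
      (∑ i ∈ Finset.Icc 1 n, c' i • H i) = ξ}

/-- Sum of the first `k` (1-based) coordinates of `v`. -/
def partialSum (n : ℕ) (v : Fin n → ℝ) (k : ℕ) : ℝ :=
  ∑ j ∈ Finset.univ.filter (fun j : Fin n => (j : ℕ) + 1 ≤ k), v j

/-- Number of coordinates of `v` equal to an odd integer. -/
noncomputable def nOdd (n : ℕ) (v : Fin n → ℝ) : ℕ :=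
  (Finset.univ.filter fun j : Fin n => ∃ m : ℤ, Odd m ∧ v j = m).card

/-- Number of coordinates of `v` equal to an even integer. -/
noncomputable def nEven (n : ℕ) (v : Fin n → ℝ) : ℕ :=
  (Finset.univ.filter fun j : Fin n => ∃ m : ℤ, Even m ∧ v j = m).card

/-! ### Auxiliary lemmas -/

lemma odd_coord (k : ℕ) : (∃ m : ℤ, Odd m ∧ (k:ℝ) = m) ↔ Odd k := by
  constructor
  · rintro ⟨m, hm, h⟩
    have h2 : (k:ℤ) = m := by exact_mod_cast h
    rw [← h2] at hm; exact_mod_cast hm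
  · intro h; exact ⟨k, by exact_mod_cast h, by norm_num⟩

lemma filter_pair_card (p : ℕ → Prop) [DecidablePred p] (a b : ℕ) (hab : a ≠ b) :
    (({a,b} : Finset ℕ).filter p).card
      = (if p a then 1 else 0) + (if p b then 1 else 0) := by
  rw [Finset.filter_insert, Finset.filter_singleton]
  by_cases ha : p a <;> by_cases hb : p b <;> simp [ha, hb, hab]

lemma sumH_coord (n : ℕ) (c : ℕ → ℕ) (hc : ∀ i ∈ Finset.Icc 1 n, c i ≤ 1) (j : Fin n) :
    (∑ i ∈ Finset.Icc 1 n, c i • Hspin n i) j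
      = ((((Finset.Icc 1 n).filter fun i => c i = 1 ∧ (j:ℕ)+1 ≤ i)).card : ℝ) := by
  rw [Finset.sum_apply, Finset.card_filter]
  push_cast
  refine Finset.sum_congr rfl fun i hi => ?_
  rcases Nat.le_one_iff_eq_zero_or_eq_one.mp (hc i hi) with h | h <;>
    by_cases hj : (j:ℕ)+1 ≤ i <;>
    simp [Hspin, h, hj]

lemma sumH_mem (n : ℕ) (c : ℕ → ℕ) :
    (∑ i ∈ Finset.Icc 1 n, c i • Hspin n i) ∈ IntLat n := by
  intro j
  refine ⟨((∑ i ∈ (Finset.Icc 1 n).filter (fun i => (j:ℕ)+1 ≤ i), c i : ℕ) : ℤ), ?_⟩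
  rw [Finset.sum_apply, Finset.sum_filter]
  push_cast
  refine Finset.sum_congr rfl fun i hi => ?_
  by_cases hj : (j:ℕ)+1 ≤ i <;> simp [Hspin, hj]

lemma canon_le_one (n : ℕ) (hn : 1 ≤ n) (c : ℕ → ℕ)
    (hmin : ∀ c' : ℕ → ℕ, (∀ i ∈ Finset.Icc 1 n, c' i ≤ c i) →
      (∑ i ∈ Finset.Icc 1 n, c' i • Hspin n i) ∈ IntLat n →
      ((∑ i ∈ Finset.Icc 1 n, c i • Hspin n i) - ∑ i ∈ Finset.Icc 1 n, c' i • Hspin n i)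
        ∈ (fun v => (2 : ℝ) • v) '' IntLat n →
      (∑ i ∈ Finset.Icc 1 n, c' i • Hspin n i) = ∑ i ∈ Finset.Icc 1 n, c i • Hspin n i) :
    ∀ i ∈ Finset.Icc 1 n, c i ≤ 1 := by
  intro i0 hi0
  by_contra hge
  push_neg at hge
  set c' : ℕ → ℕ := fun i => if i = i0 then c i - 2 else c i with hc'
  have hle : ∀ i ∈ Finset.Icc 1 n, c' i ≤ c i := by
    intro i _; simp only [hc']; split <;> omega
  have hdiff : (∑ i ∈ Finset.Icc 1 n, c i • Hspin n i)
      - (∑ i ∈ Finset.Icc 1 n, c' i • Hspin n i) = (2:ℝ) • Hspin n i0 := by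
    rw [← Finset.sum_sub_distrib]
    rw [Finset.sum_eq_single i0]
    · simp only [hc', if_pos rfl]
      have hcast : ((c i0 - 2 : ℕ) : ℝ) = (c i0 : ℝ) - 2 := by
        have h2 : 2 ≤ c i0 := by omega
        push_cast [h2]; ring
      rw [← Nat.cast_smul_eq_nsmul ℝ (c i0), ← Nat.cast_smul_eq_nsmul ℝ (c i0 - 2), hcast,
        ← sub_smul]
      norm_num
    · intro b _ hb
      simp only [hc', if_neg hb, sub_self]
    · intro h; exact absurd hi0 h
  have him : ((∑ i ∈ Finset.Icc 1 n, c i • Hspin n i)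
      - ∑ i ∈ Finset.Icc 1 n, c' i • Hspin n i) ∈ (fun v => (2 : ℝ) • v) '' IntLat n := by
    rw [hdiff]
    exact ⟨Hspin n i0, fun j => by by_cases hj : (j:ℕ)+1 ≤ i0 <;>
      [exact ⟨1, by simp [Hspin, hj]⟩; exact ⟨0, by simp [Hspin, hj]⟩], rfl⟩
  have heq := hmin c' hle (sumH_mem n c') him
  rw [heq, sub_self] at hdiff
  have h0 : ((0 : Fin n → ℝ)) ⟨0, by omega⟩ = ((2:ℝ) • Hspin n i0) ⟨0, by omega⟩ := by
    rw [hdiff]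
  have hi1 : 1 ≤ i0 := (Finset.mem_Icc.mp hi0).1
  simp [Hspin, hi1] at h0

lemma key (n : ℕ) (hn : 2 ≤ n) (I : Finset ℕ) (hI : ∀ x ∈ I, 1 ≤ x ∧ x ≤ n) :
    (Finset.univ.filter fun j : Fin n =>
        Odd (I.filter (fun i => (j:ℕ)+1 ≤ i)).card).card = 1
    ↔ (I = {1} ∨ ∃ i, 2 ≤ i ∧ i ≤ n ∧ I = {i-1, i}) := by
  constructor
  · intro h
    obtain ⟨j0, hj0⟩ := Finset.card_eq_one.mp h
    have hmem : ∀ j : Fin n, Odd (I.filter (fun i => (j:ℕ)+1 ≤ i)).card ↔ j = j0 := by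
      intro j
      constructor
      · intro hj
        have hj' : j ∈ Finset.univ.filter fun j : Fin n =>
            Odd (I.filter (fun i => (j:ℕ)+1 ≤ i)).card :=
          Finset.mem_filter.mpr ⟨Finset.mem_univ j, hj⟩
        rw [hj0] at hj'; exact Finset.mem_singleton.mp hj'
      · rintro rfl
        have hj' := Finset.mem_singleton_self j
        rw [← hj0] at hj'
        exact (Finset.mem_filter.mp hj').2
    have hne : I.Nonempty := by
      rcases Finset.eq_empty_or_nonempty I with he | h'
      · exfalso
        have h1 := (hmem j0).mpr rfl
        rw [he] at h1
        simp at h1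
      · exact h'
    set M := I.max' hne with hM
    have hMI : M ∈ I := I.max'_mem hne
    have hM1 : 1 ≤ M := (hI M hMI).1
    have hMn : M ≤ n := (hI M hMI).2
    have hfM : I.filter (fun i => (M-1:ℕ)+1 ≤ i) = {M} := by
      ext x
      simp only [Finset.mem_filter, Finset.mem_singleton]
      constructor
      · rintro ⟨hx, hx2⟩
        have := Finset.le_max' I x hx
        omega
      · rintro rfl; exact ⟨hMI, by omega⟩
    have hjM : (⟨M-1, by omega⟩ : Fin n) = j0 := by
      apply (hmem _).mp
      show Odd (I.filter (fun i => (M-1:ℕ)+1 ≤ i)).card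
      rw [hfM]; simp
    rcases Finset.eq_empty_or_nonempty (I.erase M) with he | hne2
    · left
      have hIM : I = {M} := by
        ext x
        simp only [Finset.mem_singleton]
        constructor
        · intro hx
          by_contra hxM
          have hx' : x ∈ I.erase M := Finset.mem_erase.mpr ⟨hxM, hx⟩
          rw [he] at hx'; simp at hx'
        · rintro rfl; exact hMI
      have h0 : I.filter (fun i => (0:ℕ)+1 ≤ i) = {M} := by
        rw [hIM, Finset.filter_singleton, if_pos (by omega)]
      have hj0' : (⟨0, by omega⟩ : Fin n) = j0 := by
        apply (hmem _).mp
        show Odd (I.filter (fun i => (0:ℕ)+1 ≤ i)).card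
        rw [h0]; simp
      have hval := congrArg Fin.val (hjM.trans hj0'.symm)
      simp only [] at hval
      have hM1' : M = 1 := by omega
      rw [hIM, hM1']
    · right
      set M2 := (I.erase M).max' hne2 with hM2def
      have hM2mem : M2 ∈ I.erase M := Finset.max'_mem _ hne2
      have hM2I : M2 ∈ I := (Finset.mem_erase.mp hM2mem).2
      have hM2ne : M2 ≠ M := (Finset.mem_erase.mp hM2mem).1
      have hM2lt : M2 < M := lt_of_le_of_ne (Finset.le_max' I M2 hM2I) hM2ne
      have hM21 : 1 ≤ M2 := (hI M2 hM2I).1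
      have hfM2 : I.filter (fun i => (M2:ℕ)+1 ≤ i) = {M} := by
        ext x
        simp only [Finset.mem_filter, Finset.mem_singleton]
        constructor
        · rintro ⟨hx, hx2⟩
          by_contra hxM
          have hx' : x ∈ I.erase M := Finset.mem_erase.mpr ⟨hxM, hx⟩
          have := Finset.le_max' _ x hx'
          omega
        · rintro rfl; exact ⟨hMI, by omega⟩
      have hjM2 : (⟨M2, by omega⟩ : Fin n) = j0 := by
        apply (hmem _).mp
        show Odd (I.filter (fun i => (M2:ℕ)+1 ≤ i)).card
        rw [hfM2]; simp
      have hM2eq : M2 = M - 1 := by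
        have hval := congrArg Fin.val (hjM2.trans hjM.symm)
        simpa using hval
      have hsub : I ⊆ {M-1, M} := by
        intro x hx
        by_contra hxmem
        simp only [Finset.mem_insert, Finset.mem_singleton] at hxmem
        push_neg at hxmem
        obtain ⟨hx1, hx2⟩ := hxmem
        have hxe : x ∈ (I.erase M).erase M2 :=
          Finset.mem_erase.mpr ⟨by omega, Finset.mem_erase.mpr ⟨hx2, hx⟩⟩
        have hne3 : ((I.erase M).erase M2).Nonempty := ⟨x, hxe⟩
        set M3 := ((I.erase M).erase M2).max' hne3 with hM3def
        have hM3mem := Finset.max'_mem _ hne3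
        obtain ⟨hM3ne2, hM3mem'⟩ := Finset.mem_erase.mp hM3mem
        obtain ⟨hM3neM, hM3I⟩ := Finset.mem_erase.mp hM3mem'
        have hM31 : 1 ≤ M3 := (hI M3 hM3I).1
        have hM3le : M3 ≤ M2 := Finset.le_max' _ M3 hM3mem'
        have hM3lt : M3 < M2 := lt_of_le_of_ne hM3le hM3ne2
        have hf3 : I.filter (fun i => (M3-1:ℕ)+1 ≤ i) = {M3, M-1, M} := by
          ext y
          simp only [Finset.mem_filter, Finset.mem_insert, Finset.mem_singleton]
          constructor
          · rintro ⟨hy, hy2⟩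
            by_cases h1 : y = M
            · tauto
            by_cases h2 : y = M - 1
            · tauto
            left
            have hye : y ∈ (I.erase M).erase M2 :=
              Finset.mem_erase.mpr ⟨by omega, Finset.mem_erase.mpr ⟨h1, hy⟩⟩
            have := Finset.le_max' _ y hye
            omega
          · rintro (rfl | rfl | rfl)
            · exact ⟨hM3I, by omega⟩
            · exact ⟨by rw [← hM2eq]; exact hM2I, by omega⟩
            · exact ⟨hMI, by omega⟩
        have hcard3 : ({M3, M-1, M} : Finset ℕ).card = 3 :=
          Finset.card_eq_three.mpr ⟨M3, M-1, M, by omega, by omega, by omega, rfl⟩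
        have hj3 : (⟨M3-1, by omega⟩ : Fin n) = j0 := by
          apply (hmem _).mp
          show Odd (I.filter (fun i => (M3-1:ℕ)+1 ≤ i)).card
          rw [hf3, hcard3]; decide
        have hval := congrArg Fin.val (hj3.trans hjM.symm)
        simp only [] at hval
        omega
      have hsup : ({M-1, M} : Finset ℕ) ⊆ I := by
        intro x hx
        simp only [Finset.mem_insert, Finset.mem_singleton] at hx
        rcases hx with rfl | rfl
        · rw [← hM2eq]; exact hM2I
        · exact hMI
      exact ⟨M, by omega, hMn, Finset.Subset.antisymm hsub hsup⟩
  · rintro (rfl | ⟨i, hi2, hin, rfl⟩)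
    · rw [Finset.card_eq_one]
      refine ⟨⟨0, by omega⟩, ?_⟩
      ext j
      simp only [Finset.mem_filter, Finset.mem_univ, true_and, Finset.mem_singleton,
        Finset.filter_singleton]
      by_cases hj : (j:ℕ)+1 ≤ 1 <;>
        simp [hj, Fin.ext_iff, Nat.odd_iff] <;> omega
    · rw [Finset.card_eq_one]
      refine ⟨⟨i-1, by omega⟩, ?_⟩
      ext j
      simp only [Finset.mem_filter, Finset.mem_univ, true_and, Finset.mem_singleton]
      rw [filter_pair_card _ _ _ (by omega : i-1 ≠ i)]
      by_cases h1 : (j:ℕ)+1 ≤ i-1 <;> by_cases h2 : (j:ℕ)+1 ≤ i <;>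
        simp [h1, h2, Fin.ext_iff, Nat.odd_iff] <;> omega

lemma nOdd_H1 (n : ℕ) (hn : 2 ≤ n) : nOdd n (Hspin n 1) = 1 := by
  unfold nOdd
  rw [Finset.card_eq_one]
  refine ⟨⟨0, by omega⟩, ?_⟩
  ext j
  simp only [Finset.mem_filter, Finset.mem_univ, true_and, Finset.mem_singleton]
  have hc : Hspin n 1 j = ((if (j:ℕ)+1 ≤ 1 then 1 else 0 : ℕ) : ℝ) := by
    by_cases hj : (j:ℕ)+1 ≤ 1 <;> simp [Hspin, hj]
  rw [hc, odd_coord]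
  by_cases hj : (j:ℕ)+1 ≤ 1 <;> simp [hj, Fin.ext_iff, Nat.odd_iff] <;> omega

lemma nOdd_pair (n i : ℕ) (h2 : 2 ≤ i) (hin : i ≤ n) :
    nOdd n (Hspin n (i-1) + Hspin n i) = 1 := by
  unfold nOdd
  rw [Finset.card_eq_one]
  refine ⟨⟨i-1, by omega⟩, ?_⟩
  ext j
  simp only [Finset.mem_filter, Finset.mem_univ, true_and, Finset.mem_singleton]
  have hc : (Hspin n (i-1) + Hspin n i) j
      = (((if (j:ℕ)+1 ≤ i-1 then 1 else 0) + (if (j:ℕ)+1 ≤ i then 1 else 0) : ℕ) : ℝ) := by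
    simp only [Pi.add_apply, Hspin]
    split <;> split <;> norm_num
  rw [hc, odd_coord]
  by_cases ha : (j:ℕ)+1 ≤ i-1 <;> by_cases hb : (j:ℕ)+1 ≤ i <;>
    simp [ha, hb, Fin.ext_iff, Nat.odd_iff] <;> omega

lemma nEven_H1_pos (n : ℕ) (hn : 2 ≤ n) : 1 ≤ nEven n (Hspin n 1) := by
  rw [Nat.one_le_iff_ne_zero, ← Nat.pos_iff_ne_zero]
  apply Finset.card_pos.mpr
  refine ⟨⟨1, by omega⟩, Finset.mem_filter.mpr ⟨Finset.mem_univ _, ⟨0, ?_, ?_⟩⟩⟩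
  · exact Even.zero
  · simp [Hspin]

lemma nEven_pair_pos (n i : ℕ) (hn : 2 ≤ n) (h2 : 2 ≤ i) :
    1 ≤ nEven n (Hspin n (i-1) + Hspin n i) := by
  rw [Nat.one_le_iff_ne_zero, ← Nat.pos_iff_ne_zero]
  apply Finset.card_pos.mpr
  refine ⟨⟨0, by omega⟩, Finset.mem_filter.mpr ⟨Finset.mem_univ _, ⟨2, ?_, ?_⟩⟩⟩
  · decide
  · simp only [Pi.add_apply, Hspin]
    rw [if_pos (by omega), if_pos (by omega)]
    norm_num

lemma partialSum_one (n : ℕ) (hn : 2 ≤ n) (v : Fin n → ℝ) :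
    partialSum n v 1 = v ⟨0, by omega⟩ := by
  unfold partialSum
  rw [show Finset.univ.filter (fun j : Fin n => (j:ℕ)+1 ≤ 1) = {⟨0, by omega⟩} by
    ext j
    simp only [Finset.mem_filter, Finset.mem_univ, true_and, Finset.mem_singleton,
      Fin.ext_iff]
    omega]
  rw [Finset.sum_singleton]

/-- The symmetric canonical elements `ξ` of `SO(2n+1)` with exactly
one odd coordinate — equivalently with `m_ξ^+ = 2` and `min(m_ξ^+, m_ξ^-) = 2`, i.e.
those whose associated inner symmetric space is `G^ℝ_2(2n+1)` — are exactly
`ξ_1 = H_1` and `ξ_i = H_{i-1} + H_i`, `2 ≤ i ≤ n`; the uniton number `2a_1` for the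
standard representation is `2` for `ξ_1` and `4` for each `ξ_i`, `2 ≤ i ≤ n`. -/
theorem so_odd_symmetric_canonical_grassmannian_two (n : ℕ) (hn : 2 ≤ n) :
    (∀ ξ ∈ SymCanonSet n (IntLat n) (Hspin n),
      ((nOdd n ξ = 1) ↔
        (ξ = Hspin n 1 ∨ ∃ i : ℕ, 2 ≤ i ∧ i ≤ n ∧ ξ = Hspin n (i - 1) + Hspin n i)) ∧
      ((2 * nOdd n ξ = 2 ∧ min (2 * nOdd n ξ) (2 * nEven n ξ + 1) = 2) ↔
        (ξ = Hspin n 1 ∨ ∃ i : ℕ, 2 ≤ i ∧ i ≤ n ∧ ξ = Hspin n (i - 1) + Hspin n i))) ∧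
    2 * partialSum n (Hspin n 1) 1 = 2 ∧
    (∀ i : ℕ, 2 ≤ i → i ≤ n →
      2 * partialSum n (Hspin n (i - 1) + Hspin n i) 1 = 4) := by
  refine ⟨?_, ?_, ?_⟩
  · intro ξ hξ
    obtain ⟨c, hξc, hlat, hmin⟩ := hξ
    subst hξc
    have hc : ∀ i ∈ Finset.Icc 1 n, c i ≤ 1 := canon_le_one n (by omega) c hmin
    set I : Finset ℕ := (Finset.Icc 1 n).filter (fun i => c i = 1) with hIdef
    have hI : ∀ x ∈ I, 1 ≤ x ∧ x ≤ n := fun x hx =>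
      Finset.mem_Icc.mp (Finset.mem_filter.mp hx).1
    have hcoord : ∀ j : Fin n, (∑ i ∈ Finset.Icc 1 n, c i • Hspin n i) j
        = ((I.filter fun i => (j:ℕ)+1 ≤ i).card : ℝ) := by
      intro j
      rw [sumH_coord n c hc j, hIdef, Finset.filter_filter]
    have hodd : nOdd n (∑ i ∈ Finset.Icc 1 n, c i • Hspin n i)
        = (Finset.univ.filter fun j : Fin n =>
            Odd (I.filter (fun i => (j:ℕ)+1 ≤ i)).card).card := by
      unfold nOdd
      congr 1
      apply Finset.filter_congr
      intro j _
      rw [hcoord j]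
      exact odd_coord _
    have hiff1 : nOdd n (∑ i ∈ Finset.Icc 1 n, c i • Hspin n i) = 1 ↔
        ((∑ i ∈ Finset.Icc 1 n, c i • Hspin n i) = Hspin n 1 ∨
          ∃ i : ℕ, 2 ≤ i ∧ i ≤ n ∧
            (∑ i ∈ Finset.Icc 1 n, c i • Hspin n i) = Hspin n (i - 1) + Hspin n i) := by
      constructor
      · intro h1
        rw [hodd] at h1
        rcases (key n hn I hI).mp h1 with hI1 | ⟨i, hi2, hin, hIp⟩
        · left
          funext j
          rw [hcoord j, hI1, Finset.filter_singleton]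
          by_cases hj : (j:ℕ)+1 ≤ 1 <;> simp [Hspin, hj]
        · right
          refine ⟨i, hi2, hin, funext fun j => ?_⟩
          rw [hcoord j, hIp, filter_pair_card _ _ _ (by omega : i-1 ≠ i)]
          show _ = Hspin n (i-1) j + Hspin n i j
          by_cases hb : (j:ℕ)+1 ≤ i
          · by_cases ha : (j:ℕ)+1 ≤ i-1 <;> simp [Hspin, ha, hb]
            all_goals norm_num
          · have ha : ¬((j:ℕ)+1 ≤ i-1) := by omega
            simp [Hspin, ha, hb]
      · rintro (h1 | ⟨i, hi2, hin, h1⟩)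
        · rw [h1]; exact nOdd_H1 n hn
        · rw [h1]; exact nOdd_pair n i hi2 hin
    refine ⟨hiff1, ?_, ?_⟩
    · rintro ⟨h2, _⟩
      exact hiff1.mp (by omega)
    · intro h1
      have ho := hiff1.mpr h1
      have hev : 1 ≤ nEven n (∑ i ∈ Finset.Icc 1 n, c i • Hspin n i) := by
        rcases h1 with h | ⟨i, hi2, hin, h⟩
        · rw [h]; exact nEven_H1_pos n hn
        · rw [h]; exact nEven_pair_pos n i hn hi2
      omega
  · rw [partialSum_one n hn]
    simp [Hspin]
  · intro i h2 hin
    rw [partialSum_one n hn]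
    simp only [Pi.add_apply, Hspin]
    rw [if_pos (by omega), if_pos (by omega)]
    norm_num
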